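/- Let A, E₁, E₂ be m×n real matrices with A of full row rank (rank A = m), let b ∈ ℝ^m, and set σ = σ_min(A) = inf{‖Aᵀy‖₂ : y ∈ ℝ^m, ‖y‖₂ = 1}. Suppose ‖E₁‖₂ + ‖E₂‖₂ < σ in the operator norm induced by the Euclidean norms, let x̃ = (A+E₁)ᵀ((A+E₁)(A+E₁)ᵀ)⁻¹b and ỹ = (A+E₁+E₂)ᵀ((A+E₁+E₂)(A+E₁+E₂)ᵀ)⁻¹b be the minimum-norm solutions of (A+E₁)x̃ = b and (A+E₁+E₂)ỹ = b. Then ‖A(x̃ − ỹ)‖₂ ≤ ‖E₁‖₂·‖b‖₂/(σ − ‖E₁‖₂) + (‖E₁‖₂ + ‖E₂‖₂)·‖b‖₂/(σ − ‖E₁‖₂ − ‖E₂‖₂). -/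

import Mathlib

open Matrix

noncomputable def euclNorm {k : ℕ} (x : Fin k → ℝ) : ℝ :=
  ‖(EuclideanSpace.equiv (Fin k) ℝ).symm x‖

noncomputable def opnorm {m n : ℕ} (E : Matrix (Fin m) (Fin n) ℝ) : ℝ :=
  ‖(Matrix.toEuclideanLin E).toContinuousLinearMap‖

noncomputable def sigmaMin {m n : ℕ} (A : Matrix (Fin m) (Fin n) ℝ) : ℝ :=
  sInf {r : ℝ | ∃ y : Fin m → ℝ, euclNorm y = 1 ∧ r = euclNorm (Aᵀ.mulVec y)}

lemma euclNorm_nonneg {k : ℕ} (x : Fin k → ℝ) : 0 ≤ euclNorm x := norm_nonneg _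

lemma opnorm_nonneg {m n : ℕ} (E : Matrix (Fin m) (Fin n) ℝ) : 0 ≤ opnorm E := norm_nonneg _

lemma euclNorm_add_le {k : ℕ} (u v : Fin k → ℝ) : euclNorm (u + v) ≤ euclNorm u + euclNorm v :=
  norm_add_le ((EuclideanSpace.equiv (Fin k) ℝ).symm u) ((EuclideanSpace.equiv (Fin k) ℝ).symm v)

lemma euclNorm_smul {k : ℕ} (c : ℝ) (u : Fin k → ℝ) : euclNorm (c • u) = |c| * euclNorm u := by
  have := norm_smul c ((EuclideanSpace.equiv (Fin k) ℝ).symm u)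
  simpa [euclNorm, Real.norm_eq_abs] using this

lemma euclNorm_eq_zero {k : ℕ} {u : Fin k → ℝ} : euclNorm u = 0 ↔ u = 0 := by
  rw [euclNorm, norm_eq_zero]
  constructor
  · intro h; have := congrArg (EuclideanSpace.equiv (Fin k) ℝ) h; simpa using this
  · intro h; subst h; simp

lemma dot_eq_inner {k : ℕ} (u v : Fin k → ℝ) :
    u ⬝ᵥ v = @inner ℝ _ _ ((EuclideanSpace.equiv (Fin k) ℝ).symm u)
      ((EuclideanSpace.equiv (Fin k) ℝ).symm v) := by
  simp [PiLp.inner_apply, dotProduct, RCLike.inner_apply, mul_comm]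

lemma dot_self_eq_sq {k : ℕ} (u : Fin k → ℝ) : u ⬝ᵥ u = euclNorm u ^ 2 := by
  rw [dot_eq_inner, real_inner_self_eq_norm_sq]; rfl

lemma dot_le {k : ℕ} (u v : Fin k → ℝ) : u ⬝ᵥ v ≤ euclNorm u * euclNorm v := by
  rw [dot_eq_inner]; exact real_inner_le_norm _ _

lemma euclNorm_mulVec_le {m n : ℕ} (E : Matrix (Fin m) (Fin n) ℝ) (x : Fin n → ℝ) :
    euclNorm (E *ᵥ x) ≤ opnorm E * euclNorm x := by
  have h := (Matrix.toEuclideanLin E).toContinuousLinearMap.le_opNorm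
    ((EuclideanSpace.equiv (Fin n) ℝ).symm x)
  simpa [euclNorm, opnorm, Matrix.toEuclideanLin_toLp] using h

lemma dot_mulVec' {m n : ℕ} (M : Matrix (Fin m) (Fin n) ℝ) (u : Fin m → ℝ) (v : Fin n → ℝ) :
    u ⬝ᵥ (M *ᵥ v) = (Mᵀ *ᵥ u) ⬝ᵥ v := by
  rw [dotProduct_mulVec, mulVec_transpose]

lemma euclNorm_transpose_mulVec_le {m n : ℕ} (E : Matrix (Fin m) (Fin n) ℝ) (y : Fin m → ℝ) :
    euclNorm (Eᵀ *ᵥ y) ≤ opnorm E * euclNorm y := by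
  set t := Eᵀ *ᵥ y with ht
  have h1 : euclNorm t ^ 2 = (E *ᵥ t) ⬝ᵥ y := by
    rw [← dot_self_eq_sq, ht, dotProduct_comm, dot_mulVec' Eᵀ, transpose_transpose]
  have h2 : (E *ᵥ t) ⬝ᵥ y ≤ opnorm E * euclNorm t * euclNorm y :=
    le_trans (dot_le _ _)
      (mul_le_mul_of_nonneg_right (euclNorm_mulVec_le E t) (euclNorm_nonneg y))
  rcases eq_or_lt_of_le (euclNorm_nonneg t) with h0 | h0
  · rw [← h0]; exact mul_nonneg (opnorm_nonneg E) (euclNorm_nonneg y)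
  · nlinarith [h1 ▸ h2]

lemma sigmaMin_lower {m n : ℕ} (A : Matrix (Fin m) (Fin n) ℝ) (y : Fin m → ℝ) :
    sigmaMin A * euclNorm y ≤ euclNorm (Aᵀ *ᵥ y) := by
  have hbdd : BddBelow {r : ℝ | ∃ y : Fin m → ℝ, euclNorm y = 1 ∧ r = euclNorm (Aᵀ.mulVec y)} :=
    ⟨0, by rintro r ⟨y, -, rfl⟩; exact euclNorm_nonneg _⟩
  have hle : ∀ u : Fin m → ℝ, euclNorm u = 1 → sigmaMin A ≤ euclNorm (Aᵀ *ᵥ u) := fun u hu =>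
    csInf_le hbdd ⟨u, hu, rfl⟩
  rcases eq_or_ne y 0 with rfl | hy
  · simp [euclNorm_eq_zero.2 rfl]
  · have hny : 0 < euclNorm y := lt_of_le_of_ne (euclNorm_nonneg y) (fun h => hy (euclNorm_eq_zero.1 h.symm))
    have hu : euclNorm ((euclNorm y)⁻¹ • y) = 1 := by
      rw [euclNorm_smul, abs_of_pos (inv_pos.2 hny), inv_mul_cancel₀ hny.ne']
    have h := hle _ hu
    rw [mulVec_smul, euclNorm_smul, abs_of_pos (inv_pos.2 hny)] at h
    rw [mul_comm]
    calc euclNorm y * sigmaMin A ≤ euclNorm y * ((euclNorm y)⁻¹ * euclNorm (Aᵀ *ᵥ y)) :=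
          mul_le_mul_of_nonneg_left h (euclNorm_nonneg y)
      _ = euclNorm (Aᵀ *ᵥ y) := by field_simp

lemma euclNorm_sub_le {k : ℕ} (u v : Fin k → ℝ) : euclNorm (u - v) ≤ euclNorm u + euclNorm v :=
  norm_sub_le ((EuclideanSpace.equiv (Fin k) ℝ).symm u) ((EuclideanSpace.equiv (Fin k) ℝ).symm v)

lemma minnorm {m n : ℕ} (B : Matrix (Fin m) (Fin n) ℝ) {s : ℝ} (hs : 0 < s)
    (hlow : ∀ y, s * euclNorm y ≤ euclNorm (Bᵀ *ᵥ y)) (b : Fin m → ℝ) :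
    B *ᵥ (Bᵀ *ᵥ ((B * Bᵀ)⁻¹ *ᵥ b)) = b ∧
      euclNorm (Bᵀ *ᵥ ((B * Bᵀ)⁻¹ *ᵥ b)) ≤ euclNorm b / s := by
  have hker : ∀ y, (B * Bᵀ) *ᵥ y = 0 → y = 0 := by
    intro y h
    have h0 : (Bᵀ *ᵥ y) ⬝ᵥ (Bᵀ *ᵥ y) = 0 := by
      rw [← dot_mulVec' B y (Bᵀ *ᵥ y), mulVec_mulVec, h, dotProduct_zero]
    have h1 : euclNorm (Bᵀ *ᵥ y) = 0 := by
      have h2 := dot_self_eq_sq (Bᵀ *ᵥ y)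
      nlinarith [euclNorm_nonneg (Bᵀ *ᵥ y)]
    have h3 := hlow y
    rw [h1] at h3
    exact euclNorm_eq_zero.1 (le_antisymm (by nlinarith [euclNorm_nonneg y]) (euclNorm_nonneg y))
  have hinj : Function.Injective (B * Bᵀ).mulVec := by
    intro y1 y2 h
    have := hker (y1 - y2) (by rw [mulVec_sub, h, sub_self])
    exact sub_eq_zero.1 this
  have hdet : IsUnit (B * Bᵀ).det :=
    (Matrix.isUnit_iff_isUnit_det _).1 (mulVec_injective_iff_isUnit.1 hinj)
  have hb : (B * Bᵀ) *ᵥ ((B * Bᵀ)⁻¹ *ᵥ b) = b := by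
    rw [mulVec_mulVec, mul_nonsing_inv _ hdet, one_mulVec]
  set z := (B * Bᵀ)⁻¹ *ᵥ b with hz
  set x := Bᵀ *ᵥ z with hx
  have hBx : B *ᵥ x = b := by rw [hx, mulVec_mulVec]; exact hb
  refine ⟨hBx, ?_⟩
  have h1 : euclNorm x ^ 2 = z ⬝ᵥ b :=
    calc euclNorm x ^ 2 = x ⬝ᵥ (Bᵀ *ᵥ z) := by rw [← dot_self_eq_sq, ← hx]
      _ = (B *ᵥ x) ⬝ᵥ z := by rw [dot_mulVec' Bᵀ, transpose_transpose]
      _ = z ⬝ᵥ b := by rw [hBx, dotProduct_comm]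
  have h2 : z ⬝ᵥ b ≤ euclNorm z * euclNorm b := dot_le _ _
  have h3 : s * euclNorm z ≤ euclNorm x := hlow z
  rw [le_div_iff₀ hs]
  rcases eq_or_lt_of_le (euclNorm_nonneg x) with h0 | h0
  · rw [← h0, zero_mul]; exact euclNorm_nonneg b
  · have key : s * euclNorm z * euclNorm b ≤ euclNorm x * euclNorm b :=
      mul_le_mul_of_nonneg_right h3 (euclNorm_nonneg b)
    nlinarith [euclNorm_nonneg z, euclNorm_nonneg b]

/-- Bound on A(xt − yt) for the minimum-norm solutions of the two perturbed systems. -/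
theorem stmt_17 (m n : ℕ) (A E₁ E₂ : Matrix (Fin m) (Fin n) ℝ)
    (hA : A.rank = m) (b : Fin m → ℝ)
    (hE : opnorm E₁ + opnorm E₂ < sigmaMin A)
    (xt yt : Fin n → ℝ)
    (hxt : xt = (A + E₁)ᵀ.mulVec (((A + E₁) * (A + E₁)ᵀ)⁻¹.mulVec b))
    (hyt : yt = (A + E₁ + E₂)ᵀ.mulVec (((A + E₁ + E₂) * (A + E₁ + E₂)ᵀ)⁻¹.mulVec b)) :
    euclNorm (A.mulVec (xt - yt)) ≤
      opnorm E₁ * euclNorm b / (sigmaMin A - opnorm E₁) +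
      (opnorm E₁ + opnorm E₂) * euclNorm b / (sigmaMin A - opnorm E₁ - opnorm E₂) := by
  set σ := sigmaMin A with hσ
  set e₁ := opnorm E₁ with he₁
  set e₂ := opnorm E₂ with he₂
  have he₁0 : 0 ≤ e₁ := opnorm_nonneg E₁
  have he₂0 : 0 ≤ e₂ := opnorm_nonneg E₂
  have hs₁ : 0 < σ - e₁ := by linarith
  have hs₂ : 0 < σ - e₁ - e₂ := by linarith
  have hlow₁ : ∀ y, (σ - e₁) * euclNorm y ≤ euclNorm ((A + E₁)ᵀ *ᵥ y) := by
    intro y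
    have hdecomp : Aᵀ *ᵥ y = (A + E₁)ᵀ *ᵥ y - E₁ᵀ *ᵥ y := by
      rw [transpose_add, add_mulVec]; abel
    have h1 := sigmaMin_lower A y
    have h2 := euclNorm_transpose_mulVec_le E₁ y
    have h3 : euclNorm (Aᵀ *ᵥ y) ≤ euclNorm ((A + E₁)ᵀ *ᵥ y) + euclNorm (E₁ᵀ *ᵥ y) := by
      rw [hdecomp]; exact euclNorm_sub_le _ _
    nlinarith
  have hlow₂ : ∀ y, (σ - e₁ - e₂) * euclNorm y ≤ euclNorm ((A + E₁ + E₂)ᵀ *ᵥ y) := by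
    intro y
    have hdecomp : Aᵀ *ᵥ y = (A + E₁ + E₂)ᵀ *ᵥ y - (E₁ᵀ *ᵥ y + E₂ᵀ *ᵥ y) := by
      rw [transpose_add, transpose_add, add_mulVec, add_mulVec]; abel
    have h1 := sigmaMin_lower A y
    have h2 := euclNorm_transpose_mulVec_le E₁ y
    have h2' := euclNorm_transpose_mulVec_le E₂ y
    have h3 : euclNorm (Aᵀ *ᵥ y) ≤ euclNorm ((A + E₁ + E₂)ᵀ *ᵥ y) + (euclNorm (E₁ᵀ *ᵥ y) + euclNorm (E₂ᵀ *ᵥ y)) := by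
      rw [hdecomp]
      exact le_trans (euclNorm_sub_le _ _) (by linarith [euclNorm_add_le (E₁ᵀ *ᵥ y) (E₂ᵀ *ᵥ y)])
    nlinarith
  obtain ⟨hB1, hx⟩ := minnorm (A + E₁) hs₁ hlow₁ b
  obtain ⟨hB2, hy⟩ := minnorm (A + E₁ + E₂) hs₂ hlow₂ b
  rw [← hxt] at hB1 hx
  rw [← hyt] at hB2 hy
  have hAx : A *ᵥ xt = b - E₁ *ᵥ xt := by
    rw [add_mulVec] at hB1; rw [← hB1]; abel
  have hAy : A *ᵥ yt = b - (E₁ *ᵥ yt + E₂ *ᵥ yt) := by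
    rw [add_mulVec, add_mulVec] at hB2; rw [← hB2]; abel
  have hkey : A *ᵥ (xt - yt) = (E₁ *ᵥ yt + E₂ *ᵥ yt) - E₁ *ᵥ xt := by
    rw [mulVec_sub, hAx, hAy]; abel
  have hbound : euclNorm (A *ᵥ (xt - yt)) ≤ (e₁ + e₂) * euclNorm yt + e₁ * euclNorm xt := by
    rw [hkey]
    refine le_trans (euclNorm_sub_le _ _) ?_
    have := euclNorm_add_le (E₁ *ᵥ yt) (E₂ *ᵥ yt)
    have b1 := euclNorm_mulVec_le E₁ yt
    have b2 := euclNorm_mulVec_le E₂ yt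
    have b3 := euclNorm_mulVec_le E₁ xt
    nlinarith
  have t1 : e₁ * euclNorm xt ≤ e₁ * (euclNorm b / (σ - e₁)) := mul_le_mul_of_nonneg_left hx he₁0
  have t2 : (e₁ + e₂) * euclNorm yt ≤ (e₁ + e₂) * (euclNorm b / (σ - e₁ - e₂)) :=
    mul_le_mul_of_nonneg_left hy (by linarith)
  rw [mul_div_assoc, mul_div_assoc]
  linarith
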